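/- arXiv:1503.01492 — 5 statements merged into one kernel-verified Lean document; each statement's English description precedes it below -/
import Mathlib

section
/- Let k be an algebraically closed field of characteristic p > 0. For every integer s with 2 ≤ s ≤ p−1, there is an isomorphism of representations of C_p over k: L_2 ⊗ L_s ≅ L_{s−1} ⊕ L_{s+1}. -/
/-- The nilpotent single Jordan block of size `s` (ones on the superdiagonal). -/
def jordanN (k : Type) [Field k] (s : ℕ) : Matrix (Fin s) (Fin s) k :=
  Matrix.of fun i j => if (i : ℕ) + 1 = (j : ℕ) then 1 else 0

/-- The generator `σ` of `C_p` acting on `L_s = k^s` as the unipotent Jordan block `1 + N`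
(i.e. multiplication by `1 + X` on `k[X]/(X^s)` in the basis `1, X, …, X^(s-1)`). -/
def sigmaL (k : Type) [Field k] (s : ℕ) : (Fin s → k) →ₗ[k] (Fin s → k) :=
  ((1 : Matrix (Fin s) (Fin s) k) + jordanN k s).mulVecLin

/-!
Write `M = σ ⊗ σ - 1` on `L₂ ⊗ Lₛ`, with `e₁, e₂` and `e₁, …, eₛ` the Jordan bases
(`N eᵢ = eᵢ₋₁`). The vectors `x = e₂ ⊗ eₛ` and `y = (s - 1) e₁ ⊗ eₛ - e₂ ⊗ eₛ₋₁` satisfy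
`M^(s+1) x = 0` and `M^(s-1) y = 0`, so their `M`-orbits span images of equivariant maps
`L_{s+1} → L₂ ⊗ Lₛ` and `L_{s-1} → L₂ ⊗ Lₛ`. An equivariant map out of a module on which `σ` is
unipotent is injective as soon as it is injective on the `σ`-fixed vectors; here these are sent
to `M^s x = s • e₁ ⊗ e₁` and `M^(s-2) y = e₁ ⊗ e₂ - e₂ ⊗ e₁ - (s - 2) • e₁ ⊗ e₁`, which are
independent because `s ≠ 0` in `k`. Both sides have dimension `2s`, so the sum of the two maps
is an isomorphism.
-/

open Matrix TensorProduct

section JordanBlock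

variable (k : Type) [Field k] {n : ℕ}

-- 1-indexed, with `unitVec k n 0 = 0`, so that `jordanN` lowers the index uniformly.
def unitVec (n m : ℕ) : Fin n → k := fun i => if (i : ℕ) + 1 = m then 1 else 0

@[simp]
lemma unitVec_zero (n : ℕ) : unitVec k n 0 = 0 := by
  funext i; simp [unitVec]

lemma pi_basisFun_eq_unitVec (t : Fin n) : Pi.basisFun k (Fin n) t = unitVec k n (t + 1) := by
  funext i
  simp [unitVec, Pi.single_apply, Fin.ext_iff, eq_comm]

lemma jordanN_mulVec_apply (v : Fin n → k) (i : Fin n) :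
    (jordanN k n *ᵥ v) i = if h : (i : ℕ) + 1 < n then v ⟨i + 1, h⟩ else 0 := by
  simp only [Matrix.mulVec, dotProduct, jordanN, Matrix.of_apply, ite_mul, one_mul, zero_mul]
  split_ifs with h
  · rw [Finset.sum_eq_single ⟨i + 1, h⟩ (fun j _ hj => if_neg fun hij => hj (Fin.ext hij.symm))
      (by simp)]
    simp
  · exact Finset.sum_eq_zero fun j _ => if_neg (by omega)

lemma jordanN_mulVec_unitVec {m : ℕ} (hm : m ≤ n) :
    jordanN k n *ᵥ unitVec k n m = unitVec k n (m - 1) := by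
  funext i
  rw [jordanN_mulVec_apply]
  split_ifs with h <;> simp only [unitVec] <;> split_ifs <;> first | rfl | omega

lemma sigmaL_sub_one_eq : sigmaL k n - 1 = (jordanN k n).mulVecLin := by
  rw [sigmaL, Matrix.mulVecLin_add, Matrix.mulVecLin_one, ← Module.End.one_eq_id,
    add_sub_cancel_left]

lemma sigmaL_unitVec {m : ℕ} (hm : m ≤ n) :
    sigmaL k n (unitVec k n m) = unitVec k n m + unitVec k n (m - 1) := by
  simp [sigmaL, jordanN_mulVec_unitVec k hm]

lemma sigmaL_sub_one_pow_unitVec {m : ℕ} (hm : m ≤ n) (j : ℕ) :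
    ((sigmaL k n - 1) ^ j) (unitVec k n m) = unitVec k n (m - j) := by
  induction j with
  | zero => rfl
  | succ j ih =>
    rw [pow_succ', Module.End.mul_apply, ih, sigmaL_sub_one_eq, Matrix.mulVecLin_apply,
      jordanN_mulVec_unitVec k (by omega), Nat.sub_sub]

lemma sigmaL_sub_one_pow_self : (sigmaL k n - 1) ^ n = 0 :=
  (Pi.basisFun k (Fin n)).ext fun t => by
    rw [pi_basisFun_eq_unitVec, sigmaL_sub_one_pow_unitVec k t.isLt, LinearMap.zero_apply,
      Nat.sub_eq_zero_of_le t.isLt, unitVec_zero]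

lemma isNilpotent_prodMap_sigmaL_sub_one (m n : ℕ) :
    IsNilpotent (LinearMap.prodMap (sigmaL k m) (sigmaL k n) - 1) := by
  have h : LinearMap.prodMap (sigmaL k m) (sigmaL k n) - 1 =
      LinearMap.prodMapRingHom k _ _ (sigmaL k m - 1, sigmaL k n - 1) := by
    ext <;> simp
  rw [h]
  refine IsNilpotent.map ⟨max m n, Prod.ext ?_ ?_⟩ _
  · exact pow_eq_zero_of_le (le_max_left m n) (sigmaL_sub_one_pow_self k)
  · exact pow_eq_zero_of_le (le_max_right m n) (sigmaL_sub_one_pow_self k)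

lemma eq_single_of_sigmaL_apply_eq_self (hn : 0 < n) {v : Fin n → k} (hv : sigmaL k n v = v) :
    v = Pi.single ⟨0, hn⟩ (v ⟨0, hn⟩) := by
  have hN : jordanN k n *ᵥ v = 0 := by
    rw [← Matrix.mulVecLin_apply, ← sigmaL_sub_one_eq, LinearMap.sub_apply, hv,
      Module.End.one_apply, sub_self]
  funext i
  rcases Nat.eq_zero_or_pos i with hi | hi
  · rw [show i = ⟨0, hn⟩ from Fin.ext hi, Pi.single_eq_same]
  · rw [Pi.single_eq_of_ne (fun h => by simp [h] at hi)]
    simpa [jordanN_mulVec_apply, show (i : ℕ) - 1 + 1 < n by omega, Nat.sub_add_cancel hi]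
      using congrFun hN ⟨i - 1, by omega⟩

end JordanBlock

section Intertwining

variable {R V W : Type*} [Ring R] [AddCommGroup V] [Module R V] [AddCommGroup W] [Module R W]

lemma injective_of_isNilpotent_of_comp_eq
    {f : V →ₗ[R] W} {S : Module.End R V} {T : Module.End R W} (hS : IsNilpotent S)
    (hf : f ∘ₗ S = T ∘ₗ f) (hker : ∀ x, S x = 0 → f x = 0 → x = 0) :
    Function.Injective f := by
  obtain ⟨n, hn⟩ := hS
  suffices ∀ m x, (S ^ m) x = 0 → f x = 0 → x = 0 by
    refine (injective_iff_map_eq_zero f).2 fun x hx => this n x (by simp [hn]) hx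
  intro m
  induction m with
  | zero => exact fun x hx _ => hx
  | succ m ih =>
    intro x hSx hfx
    have hfSx : f (S x) = 0 := by
      rw [← LinearMap.comp_apply, hf, LinearMap.comp_apply, hfx, map_zero]
    exact hker x (ih (S x) (by rwa [← Module.End.mul_apply, ← pow_succ]) hfSx) hfx

end Intertwining

lemma exists_linearEquiv_of_injective_of_comp_eq {R V W : Type*} [DivisionRing R]
    [AddCommGroup V] [Module R V] [AddCommGroup W] [Module R W] [FiniteDimensional R V]
    [FiniteDimensional R W] {f : V →ₗ[R] W} (hf : Function.Injective f)
    (hdim : Module.finrank R V = Module.finrank R W) {S : Module.End R V} {T : Module.End R W}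
    (hfST : f ∘ₗ S = T ∘ₗ f) : ∃ e : W ≃ₗ[R] V, ∀ w, e (T w) = S (e w) := by
  let g := LinearEquiv.ofBijective f
    ⟨hf, (LinearMap.injective_iff_surjective_of_finrank_eq_finrank hdim).1 hf⟩
  refine ⟨g.symm, fun w => g.injective ?_⟩
  calc g (g.symm (T w)) = T (g (g.symm w)) := by simp only [LinearEquiv.apply_symm_apply]
    _ = f (S (g.symm w)) := (LinearMap.congr_fun hfST _).symm

section CyclicMap

variable {k : Type} {V : Type*} [Field k] [AddCommGroup V] [Module k V] (T : Module.End k V)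
  {n : ℕ} {v : V}

def cyclicMap (n : ℕ) (v : V) : (Fin n → k) →ₗ[k] V :=
  Fintype.linearCombination k fun i : Fin n => ((T - 1) ^ (n - 1 - i)) v

lemma cyclicMap_single (i : Fin n) (c : k) :
    cyclicMap T n v (Pi.single i c) = c • ((T - 1) ^ (n - 1 - i)) v :=
  Fintype.linearCombination_apply_single k _ i c

lemma cyclicMap_unitVec (hv : ((T - 1) ^ n) v = 0) {m : ℕ} (hm : m ≤ n) :
    cyclicMap T n v (unitVec k n m) = ((T - 1) ^ (n - m)) v := by
  cases m with
  | zero => rw [unitVec_zero, map_zero, Nat.sub_zero, hv]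
  | succ m =>
    rw [← pi_basisFun_eq_unitVec k ⟨m, hm⟩, Pi.basisFun_apply, cyclicMap_single, one_smul,
      Fin.val_mk, Nat.sub_sub, Nat.add_comm]

lemma cyclicMap_comp_sigmaL (hv : ((T - 1) ^ n) v = 0) :
    cyclicMap T n v ∘ₗ sigmaL k n = T ∘ₗ cyclicMap T n v := by
  refine (Pi.basisFun k (Fin n)).ext fun t => ?_
  have ht : (t : ℕ) + 1 ≤ n := t.isLt
  rw [LinearMap.comp_apply, LinearMap.comp_apply, pi_basisFun_eq_unitVec,
    sigmaL_unitVec k ht, map_add, cyclicMap_unitVec T hv ht, cyclicMap_unitVec T hv (by omega),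
    Nat.add_sub_cancel, show n - t = n - (t + 1) + 1 by omega, pow_succ', Module.End.mul_apply]
  simp

variable {m : ℕ} {w : V}

lemma coprod_cyclicMap_comp_prodMap (hv : ((T - 1) ^ m) v = 0) (hw : ((T - 1) ^ n) w = 0) :
    (cyclicMap T m v).coprod (cyclicMap T n w) ∘ₗ LinearMap.prodMap (sigmaL k m) (sigmaL k n) =
      T ∘ₗ (cyclicMap T m v).coprod (cyclicMap T n w) := by
  refine LinearMap.ext fun ⟨a, b⟩ => ?_
  have ha := LinearMap.congr_fun (cyclicMap_comp_sigmaL T hv) a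
  have hb := LinearMap.congr_fun (cyclicMap_comp_sigmaL T hw) b
  simp only [LinearMap.comp_apply] at ha hb ⊢
  rw [LinearMap.prodMap_apply, LinearMap.coprod_apply, LinearMap.coprod_apply, ha, hb, map_add]

lemma injective_coprod_cyclicMap (hm : 0 < m) (hn : 0 < n) (hv : ((T - 1) ^ m) v = 0)
    (hw : ((T - 1) ^ n) w = 0)
    (hind : LinearIndependent k ![((T - 1) ^ (m - 1)) v, ((T - 1) ^ (n - 1)) w]) :
    Function.Injective ((cyclicMap T m v).coprod (cyclicMap T n w)) := by
  refine injective_of_isNilpotent_of_comp_eq (isNilpotent_prodMap_sigmaL_sub_one k m n)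
    (T := T - 1) ?_ ?_
  · rw [LinearMap.comp_sub, LinearMap.sub_comp, coprod_cyclicMap_comp_prodMap T hv hw]
    rfl
  rintro ⟨a, b⟩ hab hFab
  have hfix : sigmaL k m a = a ∧ sigmaL k n b = b := by
    simpa [sub_eq_zero] using hab
  rw [eq_single_of_sigmaL_apply_eq_self k hm hfix.1,
    eq_single_of_sigmaL_apply_eq_self k hn hfix.2] at hFab ⊢
  simp only [LinearMap.coprod_apply, cyclicMap_single, Nat.sub_zero] at hFab
  obtain ⟨ha, hb⟩ := LinearIndependent.pair_iff.1 hind _ _ hFab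
  rw [ha, hb, Pi.single_zero, Pi.single_zero, Prod.mk_zero_zero]

end CyclicMap

section TensorTwo

variable (k : Type) [Field k] {r s : ℕ}

def unitTmul (r s i m : ℕ) : (Fin r → k) ⊗[k] (Fin s → k) :=
  unitVec k r i ⊗ₜ unitVec k s m

@[simp]
lemma unitTmul_zero_left (r s m : ℕ) : unitTmul k r s 0 m = 0 := by
  simp [unitTmul]

@[simp]
lemma unitTmul_zero_right (r s i : ℕ) : unitTmul k r s i 0 = 0 := by
  simp [unitTmul]

lemma map_sigmaL_sub_one_unitTmul {i m : ℕ} (hi : i ≤ r) (hm : m ≤ s) :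
    (map (sigmaL k r) (sigmaL k s) - 1) (unitTmul k r s i m) =
      unitTmul k r s (i - 1) m + unitTmul k r s i (m - 1) + unitTmul k r s (i - 1) (m - 1) := by
  simp only [unitTmul, LinearMap.sub_apply, map_tmul, sigmaL_unitVec k hi, sigmaL_unitVec k hm,
    Module.End.one_apply, add_tmul, tmul_add]
  abel

lemma map_sigmaL_sub_one_pow_unitTmul_one {m : ℕ} (hm : m ≤ s) (j : ℕ) :
    ((map (sigmaL k 2) (sigmaL k s) - 1) ^ j) (unitTmul k 2 s 1 m) = unitTmul k 2 s 1 (m - j) := by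
  induction j with
  | zero => rfl
  | succ j ih =>
    rw [pow_succ', Module.End.mul_apply, ih, map_sigmaL_sub_one_unitTmul k (by norm_num) (by omega)]
    simp [Nat.sub_sub]

lemma map_sigmaL_sub_one_pow_unitTmul_two {m : ℕ} (hm : m ≤ s) (j : ℕ) :
    ((map (sigmaL k 2) (sigmaL k s) - 1) ^ j) (unitTmul k 2 s 2 m) =
      unitTmul k 2 s 2 (m - j) +
        (j : k) • (unitTmul k 2 s 1 (m + 1 - j) + unitTmul k 2 s 1 (m - j)) := by
  induction j with
  | zero => simp
  | succ j ih =>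
    have hQ : (map (sigmaL k 2) (sigmaL k s) - 1)
        ((j : k) • (unitTmul k 2 s 1 (m + 1 - j) + unitTmul k 2 s 1 (m - j))) =
        (j : k) • (unitTmul k 2 s 1 (m - j) + unitTmul k 2 s 1 (m - (j + 1))) := by
      rcases j with _ | j
      · simp
      · rw [map_smul, map_add, map_sigmaL_sub_one_unitTmul k (by norm_num) (by omega),
          map_sigmaL_sub_one_unitTmul k (by norm_num) (by omega)]
        simp [Nat.sub_sub, show m + 1 - (j + 1) = m - j by omega]
    rw [pow_succ', Module.End.mul_apply, ih, map_add, hQ,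
      map_sigmaL_sub_one_unitTmul k le_rfl (by omega)]
    simp only [Nat.sub_sub, show m + 1 - (j + 1) = m - j by omega, show 2 - 1 = 1 from rfl]
    push_cast
    module

lemma tensorProduct_basisFun_repr_unitTmul (i m : ℕ) (a : Fin r) (b : Fin s) :
    ((Pi.basisFun k (Fin r)).tensorProduct (Pi.basisFun k (Fin s))).repr
      (unitTmul k r s i m) (a, b) =
      unitVec k r i a * unitVec k s m b := by
  simp [unitTmul, mul_comm]

variable (s)

def generatorSucc : (Fin 2 → k) ⊗[k] (Fin s → k) := unitTmul k 2 s 2 s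

def generatorPred : (Fin 2 → k) ⊗[k] (Fin s → k) :=
  ((s - 1 : ℕ) : k) • unitTmul k 2 s 1 s - unitTmul k 2 s 2 (s - 1)

lemma map_sigmaL_sub_one_pow_succ_generatorSucc :
    ((map (sigmaL k 2) (sigmaL k s) - 1) ^ (s + 1)) (generatorSucc k s) = 0 := by
  simp [generatorSucc, map_sigmaL_sub_one_pow_unitTmul_two k le_rfl]

lemma map_sigmaL_sub_one_pow_generatorSucc :
    ((map (sigmaL k 2) (sigmaL k s) - 1) ^ s) (generatorSucc k s) =
      (s : k) • unitTmul k 2 s 1 1 := by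
  simp [generatorSucc, map_sigmaL_sub_one_pow_unitTmul_two k le_rfl]

lemma map_sigmaL_sub_one_pow_pred_generatorPred (hs : 1 ≤ s) :
    ((map (sigmaL k 2) (sigmaL k s) - 1) ^ (s - 1)) (generatorPred k s) = 0 := by
  simp [generatorPred, map_sigmaL_sub_one_pow_unitTmul_one k le_rfl,
    map_sigmaL_sub_one_pow_unitTmul_two k (Nat.sub_le s 1), Nat.sub_sub_self hs,
    Nat.sub_add_cancel hs]

lemma map_sigmaL_sub_one_pow_sub_two_generatorPred (hs : 2 ≤ s) :
    ((map (sigmaL k 2) (sigmaL k s) - 1) ^ (s - 2)) (generatorPred k s) =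
      unitTmul k 2 s 1 2 - unitTmul k 2 s 2 1 - ((s - 2 : ℕ) : k) • unitTmul k 2 s 1 1 := by
  rw [generatorPred, map_sub, map_smul, map_sigmaL_sub_one_pow_unitTmul_one k le_rfl,
    map_sigmaL_sub_one_pow_unitTmul_two k (Nat.sub_le s 1), show s - (s - 2) = 2 by omega,
    show s - 1 - (s - 2) = 1 by omega, show s - 1 + 1 - (s - 2) = 2 by omega,
    Nat.cast_sub (by omega : 1 ≤ s), Nat.cast_sub hs]
  push_cast
  module

lemma linearIndependent_pow_generatorPred_pow_generatorSucc (hs : 2 ≤ s) (hsk : (s : k) ≠ 0) :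
    LinearIndependent k ![((map (sigmaL k 2) (sigmaL k s) - 1) ^ (s - 2)) (generatorPred k s),
      ((map (sigmaL k 2) (sigmaL k s) - 1) ^ s) (generatorSucc k s)] := by
  refine LinearIndependent.pair_iff.2 fun a b h => ?_
  rw [map_sigmaL_sub_one_pow_sub_two_generatorPred k s hs,
    map_sigmaL_sub_one_pow_generatorSucc] at h
  let B := (Pi.basisFun k (Fin 2)).tensorProduct (Pi.basisFun k (Fin s))
  have ha := congrArg (fun z => B.repr z (1, ⟨0, by omega⟩)) h
  have hb := congrArg (fun z => B.repr z (0, ⟨0, by omega⟩)) h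
  simp [B, tensorProduct_basisFun_repr_unitTmul, unitVec] at ha hb
  simpa [ha, hsk] using hb

end TensorTwo

theorem exists_linearEquiv_tensor_two_of_natCast_ne_zero (k : Type) [Field k] (s : ℕ)
    (hs : 2 ≤ s) (hsk : (s : k) ≠ 0) :
    ∃ e : TensorProduct k (Fin 2 → k) (Fin s → k) ≃ₗ[k]
        ((Fin (s - 1) → k) × (Fin (s + 1) → k)),
      ∀ x, e (TensorProduct.map (sigmaL k 2) (sigmaL k s) x) =
        (LinearMap.prodMap (sigmaL k (s - 1)) (sigmaL k (s + 1))) (e x) := by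
  have hpred := map_sigmaL_sub_one_pow_pred_generatorPred k s (by omega)
  have hsucc := map_sigmaL_sub_one_pow_succ_generatorSucc k s
  have hinj := injective_coprod_cyclicMap _ (by omega) s.succ_pos hpred hsucc
    (linearIndependent_pow_generatorPred_pow_generatorSucc k s hs hsk)
  have hdim : Module.finrank k ((Fin (s - 1) → k) × (Fin (s + 1) → k)) =
      Module.finrank k ((Fin 2 → k) ⊗[k] (Fin s → k)) := by
    simp only [Module.finrank_prod, Module.finrank_tensorProduct, Module.finrank_fin_fun]
    omega
  exact exists_linearEquiv_of_injective_of_comp_eq hinj hdim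
    (coprod_cyclicMap_comp_prodMap _ hpred hsucc)

theorem stmt2_general (p : ℕ) (k : Type) [Field k] [CharP k p]
    (s : ℕ) (hs1 : 2 ≤ s) (hs2 : s ≤ p - 1) :
    ∃ e : TensorProduct k (Fin 2 → k) (Fin s → k) ≃ₗ[k]
        ((Fin (s - 1) → k) × (Fin (s + 1) → k)),
      ∀ x, e (TensorProduct.map (sigmaL k 2) (sigmaL k s) x) =
        (LinearMap.prodMap (sigmaL k (s - 1)) (sigmaL k (s + 1))) (e x) := by
  refine exists_linearEquiv_tensor_two_of_natCast_ne_zero k s hs1 fun hs0 => ?_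
  have := Nat.le_of_dvd (by omega) ((CharP.cast_eq_zero_iff k p s).1 hs0)
  omega

/-- Over an algebraically closed field of characteristic `p > 0`,
for `2 ≤ s ≤ p − 1` there is an isomorphism of representations of `C_p`:
`L_2 ⊗ L_s ≅ L_{s−1} ⊕ L_{s+1}`, i.e. a `k`-linear equivalence intertwining the
(diagonal) action of `σ` on the tensor product with the direct-sum action. -/
theorem stmt2 (p : ℕ) (hp : p.Prime) (k : Type) [Field k] [IsAlgClosed k] [CharP k p]
    (s : ℕ) (hs1 : 2 ≤ s) (hs2 : s ≤ p - 1) :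
    ∃ e : TensorProduct k (Fin 2 → k) (Fin s → k) ≃ₗ[k]
        ((Fin (s - 1) → k) × (Fin (s + 1) → k)),
      ∀ x, e (TensorProduct.map (sigmaL k 2) (sigmaL k s) x) =
        (LinearMap.prodMap (sigmaL k (s - 1)) (sigmaL k (s + 1))) (e x) :=
  stmt2_general p k s hs1 hs2
end

section
/- Let p be a prime and let r, s be integers with 1 ≤ r, s ≤ p−1. Set c = min(r, s, p−r, p−s). Then in the Verlinde ring ℤ[X]/(P_p) one has P_r·P_s ≡ Σ_{i=1}^{c} P_{|r−s|+2i−1} (mod P_p). -/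
/-!
By the Clebsch–Gordan rule `P_m P_{m+k} = Σ_{i<m} P_{k+2i+1}`, which holds exactly in `ℤ[X]`,
a product `P_r P_s` with `r ≤ s` is the sum of the `P_j` with `j` running through
`s - r + 1, s - r + 3, …, s + r - 1`. When `r + s > p`, the terms beyond the first `p - s` form a
block symmetric about `p`; read backwards through the same rule, that block is exactly
`P_{r+s-p} P_p`, hence vanishes modulo `P_p`.
-/

open Polynomial

/-- The Chebyshev-like polynomials `P_s ∈ ℤ[X]`: `P_0 = 0`, `P_1 = 1`,
`P_{s+2} = X·P_{s+1} − P_s` (so that `P_s(2 cos θ) = sin(sθ)/sin θ`). The Verlinde ring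
`K(Ver_p)` is `ℤ[X]/(P_p)`, where the class of `P_s` is the class `[L̄_s]`. -/
noncomputable def chebP : ℕ → Polynomial ℤ
  | 0 => 0
  | 1 => 1
  | n + 2 => X * chebP (n + 1) - chebP n

@[simp]
lemma chebP_zero : chebP 0 = 0 := by
  rw [chebP]

@[simp]
lemma chebP_one : chebP 1 = 1 := by
  rw [chebP]

lemma chebP_add_two (n : ℕ) : chebP (n + 2) = X * chebP (n + 1) - chebP n := by
  rw [chebP]

lemma chebP_succ_mul_chebP_succ (a b : ℕ) :
    chebP (a + 1) * chebP (b + 1) = chebP a * chebP b + chebP (a + b + 1) := by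
  induction a generalizing b with
  | zero => simp
  | succ a ih =>
    have h := ih (b + 1)
    rw [chebP_add_two] at h
    rw [chebP_add_two, show a + 1 + b + 1 = a + (b + 1) + 1 by omega]
    linear_combination h

lemma chebP_mul_chebP_add (m k : ℕ) :
    chebP m * chebP (m + k) = ∑ i ∈ Finset.range m, chebP (k + 2 * i + 1) := by
  induction m with
  | zero => simp
  | succ m ih =>
    rw [Finset.sum_range_succ, ← ih, show m + 1 + k = m + k + 1 by omega,
      chebP_succ_mul_chebP_succ, show m + (m + k) + 1 = k + 2 * m + 1 by omega]

lemma chebP_add_mul_chebP_add_eq_sum_add_mul (c t d : ℕ) :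
    chebP (c + t) * chebP (c + t + d) =
      ∑ i ∈ Finset.range c, chebP (d + 2 * i + 1) + chebP t * chebP (t + (d + 2 * c)) := by
  rw [chebP_mul_chebP_add, chebP_mul_chebP_add, Finset.sum_range_add]
  refine congr_arg _ (Finset.sum_congr rfl fun i _ => congr_arg chebP ?_)
  omega

lemma chebP_mul_eq_sum_add_mul_chebP {r s n : ℕ} (hrs : r ≤ s) (hsn : s ≤ n) :
    chebP r * chebP s =
      ∑ i ∈ Finset.range (min r (n - s)), chebP (s - r + 2 * i + 1) +
        chebP (r + s - n) * chebP n := by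
  rcases le_total r (n - s) with hr | hr
  · rw [min_eq_left hr, show r + s - n = 0 by omega, chebP_zero, zero_mul, add_zero,
      ← chebP_mul_chebP_add, Nat.add_sub_cancel' hrs]
  · rw [min_eq_right hr]
    have h := chebP_add_mul_chebP_add_eq_sum_add_mul (n - s) (r + s - n) (s - r)
    rwa [show n - s + (r + s - n) = r by omega, show r + (s - r) = s by omega,
      show r + s - n + (s - r + 2 * (n - s)) = n by omega] at h

theorem stmt10_general (p : ℕ) (r s : ℕ)
    (hr2 : r ≤ p - 1) (hs2 : s ≤ p - 1)
    (d c : ℕ) (hd : d = max r s - min r s)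
    (hc : c = min (min r s) (min (p - r) (p - s))) :
    chebP p ∣ chebP r * chebP s - ∑ i ∈ Finset.range c, chebP (d + 2 * i + 1) := by
  wlog hrs : r ≤ s generalizing r s
  · rw [mul_comm]
    exact this s r hs2 hr2 (by omega) (by omega) (le_of_not_ge hrs)
  rw [hd, hc, max_eq_right hrs, min_eq_left hrs,
    show min r (min (p - r) (p - s)) = min r (p - s) by omega,
    chebP_mul_eq_sum_add_mul_chebP (n := p) hrs (by omega), add_sub_cancel_left]
  exact dvd_mul_left _ _

/-- Let `p` be a prime and `1 ≤ r, s ≤ p − 1`; set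
`c = min(r, s, p−r, p−s)` and `d = |r − s|`. Then in the Verlinde ring `ℤ[X]/(P_p)`
one has `P_r · P_s ≡ Σ_{i=1}^{c} P_{|r−s|+2i−1} (mod P_p)` (the `i`-th term below,
`0 ≤ i < c`, is `P_{d+2i+1} = P_{|r−s|+2(i+1)−1}`). -/
theorem stmt10 (p : ℕ) (hp : p.Prime) (r s : ℕ)
    (hr1 : 1 ≤ r) (hr2 : r ≤ p - 1) (hs1 : 1 ≤ s) (hs2 : s ≤ p - 1)
    (d c : ℕ) (hd : d = max r s - min r s)
    (hc : c = min (min r s) (min (p - r) (p - s))) :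
    chebP p ∣ chebP r * chebP s - ∑ i ∈ Finset.range c, chebP (d + 2 * i + 1) :=
  stmt10_general p r s hr2 hs2 d c hd hc
end

section
/- Let p be an odd prime. In the ring (ℤ/pℤ)[X]/(P_p) (the Verlinde ring K(Ver_p) reduced modulo p), one has X^p ≡ −2·P_{p−1} (mod P_p). In other words, in ℤ[X] the polynomial X^p + 2·P_{p−1} lies in the ideal generated by p and P_p. -/
/-!
Both sides are read off the Dickson polynomial `D_p = dickson 1 1 p`. Over `ℤ` it satisfies
`D_{n+1} = X·P_{n+1} − 2·P_n` (both sides obey the recursion `Y_{n+2} = X·Y_{n+1} − Y_n`), and in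
characteristic `p` it is `X^p`, since `D_p(t + t⁻¹) = t^p + t^{-p} = (t + t⁻¹)^p`. Hence
`X^p + 2·P̄_{p−1} = X·P̄_p` modulo `p`, and lifting this divisibility to `ℤ[X]` gives membership
in `(p, P_p)`.
-/

open Polynomial

lemma dickson_one_one_eq_chebP : ∀ n : ℕ,
    dickson 1 (1 : ℤ) (n + 1) = X * chebP (n + 1) - 2 * chebP n
  | 0 => by simp [chebP]
  | 1 => by simp [chebP]; ring
  | n + 2 => by
      rw [dickson_add_two, dickson_one_one_eq_chebP (n + 1), dickson_one_one_eq_chebP n,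
        chebP_add_two (n + 1), chebP_add_two n, map_one]
      ring

lemma X_pow_charP_eq_chebP {R : Type*} [CommRing R] (p : ℕ) [Fact p.Prime] [CharP R p] :
    (X : R[X]) ^ p =
      X * (chebP p).map (Int.castRingHom R) - 2 * (chebP (p - 1)).map (Int.castRingHom R) := by
  obtain ⟨n, rfl⟩ : ∃ n, p = n + 1 := Nat.exists_eq_add_one.mpr (Fact.out : p.Prime).pos
  rw [← dickson_one_one_charP, ← map_one (Int.castRingHom R), ← map_dickson,
    dickson_one_one_eq_chebP, Nat.add_sub_cancel]
  simp

lemma C_dvd_of_map_zmod_eq_zero {p : ℕ} {f : ℤ[X]} (hf : f.map (Int.castRingHom (ZMod p)) = 0) :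
    C (p : ℤ) ∣ f := by
  refine (C_dvd_iff_dvd_coeff _ _).mpr fun i => ?_
  rw [← ZMod.intCast_zmod_eq_zero_iff_dvd, ← eq_intCast (Int.castRingHom (ZMod p)), ← coeff_map,
    hf, coeff_zero]

lemma mem_span_C_pair_of_map_zmod_dvd {p : ℕ} {f g : ℤ[X]}
    (h : g.map (Int.castRingHom (ZMod p)) ∣ f.map (Int.castRingHom (ZMod p))) :
    f ∈ Ideal.span {C (p : ℤ), g} := by
  obtain ⟨q, hq⟩ := h
  obtain ⟨q, rfl⟩ := map_surjective _ (ZMod.ringHom_surjective (Int.castRingHom (ZMod p))) q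
  obtain ⟨r, hr⟩ : C (p : ℤ) ∣ f - g * q :=
    C_dvd_of_map_zmod_eq_zero (by rw [Polynomial.map_sub, Polynomial.map_mul, hq, sub_self])
  exact Ideal.mem_span_pair.mpr ⟨r, q, by linear_combination -hr⟩

theorem stmt11_general (p : ℕ) (hp : p.Prime) :
    ((chebP p).map (Int.castRingHom (ZMod p)) ∣
      (X : Polynomial (ZMod p)) ^ p + 2 * (chebP (p - 1)).map (Int.castRingHom (ZMod p)))
    ∧ (X : Polynomial ℤ) ^ p + 2 * chebP (p - 1) ∈
        Ideal.span ({C (p : ℤ), chebP p} : Set (Polynomial ℤ)) := by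
  have : Fact p.Prime := ⟨hp⟩
  have hdvd : (chebP p).map (Int.castRingHom (ZMod p)) ∣
      (X : Polynomial (ZMod p)) ^ p + 2 * (chebP (p - 1)).map (Int.castRingHom (ZMod p)) :=
    ⟨X, by rw [X_pow_charP_eq_chebP p]; ring⟩
  refine ⟨hdvd, mem_span_C_pair_of_map_zmod_dvd ?_⟩
  simpa using hdvd

/-- Let `p` be an odd prime. In `(ℤ/pℤ)[X]/(P_p)` one has
`X^p ≡ −2·P_{p−1} (mod P_p)`, i.e. `P̄_p ∣ X^p + 2·P̄_{p−1}` in `(ℤ/pℤ)[X]`.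
In other words, in `ℤ[X]` the polynomial `X^p + 2·P_{p−1}` lies in the ideal
generated by `p` and `P_p`. -/
theorem stmt11 (p : ℕ) (hp : p.Prime) (hodd : Odd p) :
    ((chebP p).map (Int.castRingHom (ZMod p)) ∣
      (X : Polynomial (ZMod p)) ^ p + 2 * (chebP (p - 1)).map (Int.castRingHom (ZMod p)))
    ∧ (X : Polynomial ℤ) ^ p + 2 * chebP (p - 1) ∈
        Ideal.span ({C (p : ℤ), chebP p} : Set (Polynomial ℤ)) :=
  stmt11_general p hp
end

section
/- Let p be an odd prime and let s be an integer with 1 ≤ s ≤ p−1. In the ring (ℤ/pℤ)[X]/(P_p), one has: P_s^p ≡ s·1 (mod P_p) if s is odd, and P_s^p ≡ −s·P_{p−1} (mod P_p) if s is even. -/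
/-!
In characteristic `p` the Dickson polynomial `D_p` (with `D_n(x + x⁻¹) = xⁿ + x⁻ⁿ`) is `X ^ p`,
so `P_s ^ p = P_s(X ^ p) = P_s ∘ D_p`. Modulo `P_p` the recurrences give `D_p ≡ 2q` with
`q = -P_{p-1}` and `q² ≡ 1` (Cassini's identity), and a Chebyshev polynomial evaluated at `2q`
with `q² = 1` is `P_s(2q) = s·q^(s-1)`, i.e. `s` for odd `s` and `s·q` for even `s`.
-/

open Polynomial

lemma chebP_eq_chebyshev_S (n : ℕ) : chebP n = Chebyshev.S ℤ (n - 1 : ℤ) := by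
  induction n using Nat.twoStepInduction with
  | zero => simp [chebP]
  | one => simp [chebP]
  | more n ih0 ih1 =>
    rw [chebP, ih0, ih1, Chebyshev.S_eq ℤ ((n + 2 : ℕ) - 1 : ℤ)]
    push_cast
    ring_nf

lemma aeval_two_mul_chebP {R : Type*} [CommRing R] {q : R} (hq : q ^ 2 = 1) (s : ℕ) :
    aeval (2 * q) (chebP s) = s * q ^ (s + 1) := by
  induction s using Nat.twoStepInduction with
  | zero => simp [chebP]
  | one => simp [chebP, hq]
  | more n ih0 ih1 =>
    rw [chebP, map_sub, map_mul, aeval_X, ih0, ih1]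
    push_cast
    linear_combination (n * q ^ (n + 1)) * hq

lemma map_comp_eq_aeval {R : Type*} [CommRing R] (f : ℤ[X] →+* R) (P Q : ℤ[X]) :
    f (P.comp Q) = aeval (f Q) P := by
  rw [comp, hom_eval₂, aeval_def, Subsingleton.elim (f.comp C) (algebraMap ℤ R)]

section
variable {R : Type*} [CommRing R] (f : ℤ[X] →+* R) {k : ℕ} (hf : f (chebP (k + 1)) = 0)
include hf

lemma map_chebyshev_S_eq_zero : f (Chebyshev.S ℤ k) = 0 := by
  simpa [chebP_eq_chebyshev_S] using hf

lemma sq_map_chebP_eq_one : f (chebP k) ^ 2 = 1 := by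
  have h := congrArg f (Chebyshev.S_sq_add_S_sq ℤ ((k : ℤ) - 1))
  simp only [sub_add_cancel, map_sub, map_add, map_mul, map_pow, map_one, map_chebyshev_S_eq_zero f hf] at h
  rw [chebP_eq_chebyshev_S]
  linear_combination h

lemma map_dickson_eq : f (dickson 1 (1 : ℤ) (k + 1)) = 2 * -f (chebP k) := by
  rw [dickson_one_one_eq_chebyshev_C, Chebyshev.C_eq_S_sub_X_mul_S, chebP_eq_chebyshev_S]
  push_cast
  rw [Chebyshev.S_add_one]
  simp only [add_sub_cancel_right, map_sub, map_mul, map_ofNat, map_chebyshev_S_eq_zero f hf]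
  ring

lemma map_chebP_comp_dickson (s : ℕ) :
    f ((chebP s).comp (dickson 1 (1 : ℤ) (k + 1))) = s * (-f (chebP k)) ^ (s + 1) := by
  rw [map_comp_eq_aeval, map_dickson_eq f hf,
    aeval_two_mul_chebP (by rw [neg_sq, sq_map_chebP_eq_one f hf])]

lemma map_chebP_comp_dickson_of_odd {s : ℕ} (hs : Odd s) :
    f ((chebP s).comp (dickson 1 (1 : ℤ) (k + 1))) = s := by
  obtain ⟨j, rfl⟩ := hs
  rw [map_chebP_comp_dickson f hf, show 2 * j + 1 + 1 = 2 * (j + 1) by ring, pow_mul, neg_sq,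
    sq_map_chebP_eq_one f hf, one_pow, mul_one]

lemma map_chebP_comp_dickson_of_even {s : ℕ} (hs : Even s) :
    f ((chebP s).comp (dickson 1 (1 : ℤ) (k + 1))) = -(s * f (chebP k)) := by
  obtain ⟨j, rfl⟩ := hs
  rw [map_chebP_comp_dickson f hf, ← two_mul, pow_succ, pow_mul, neg_sq,
    sq_map_chebP_eq_one f hf, one_pow, one_mul, mul_neg]

end

lemma map_pow_char_eq_map_comp_dickson (p : ℕ) [Fact p.Prime] (P : ℤ[X]) :
    P.map (Int.castRingHom (ZMod p)) ^ p
      = (P.comp (dickson 1 (1 : ℤ) p)).map (Int.castRingHom (ZMod p)) := by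
  rw [Polynomial.map_comp, map_dickson, map_one, dickson_one_one_zmod_p,
    ← expand_eq_comp_X_pow, ZMod.expand_card]

theorem stmt12_general (p : ℕ) (hp : p.Prime)
    (s : ℕ) :
    (Odd s →
      (chebP p).map (Int.castRingHom (ZMod p)) ∣
        ((chebP s).map (Int.castRingHom (ZMod p))) ^ p - (s : Polynomial (ZMod p)))
    ∧ (Even s →
      (chebP p).map (Int.castRingHom (ZMod p)) ∣
        ((chebP s).map (Int.castRingHom (ZMod p))) ^ p +
          (s : Polynomial (ZMod p)) * (chebP (p - 1)).map (Int.castRingHom (ZMod p))) := by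
  have : Fact p.Prime := ⟨hp⟩
  obtain ⟨k, rfl⟩ : ∃ k, p = k + 1 := ⟨p - 1, (Nat.succ_pred_eq_of_pos hp.pos).symm⟩
  simp only [Nat.add_sub_cancel, ← Ideal.mem_span_singleton, ← Ideal.Quotient.eq_zero_iff_mem,
    map_sub, map_add, map_mul, map_natCast]
  set I := Ideal.span {(chebP (k + 1)).map (Int.castRingHom (ZMod (k + 1)))}
  let f := (Ideal.Quotient.mk I).comp (mapRingHom (Int.castRingHom (ZMod (k + 1))))
  have hf : f (chebP (k + 1)) = 0 :=
    Ideal.Quotient.eq_zero_iff_mem.2 (Ideal.mem_span_singleton_self _)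
  have hpow : Ideal.Quotient.mk I ((chebP s).map (Int.castRingHom (ZMod (k + 1))) ^ (k + 1))
      = f ((chebP s).comp (dickson 1 (1 : ℤ) (k + 1))) := by
    rw [map_pow_char_eq_map_comp_dickson]
    rfl
  rw [hpow]
  exact ⟨fun hs => by rw [map_chebP_comp_dickson_of_odd f hf hs, sub_self],
    fun hs => by rw [map_chebP_comp_dickson_of_even f hf hs]; exact neg_add_cancel _⟩

/-- Let `p` be an odd prime and `1 ≤ s ≤ p − 1`. In the ring
`(ℤ/pℤ)[X]/(P_p)`: if `s` is odd then `P_s^p ≡ s (mod P_p)`, and if `s` is even then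
`P_s^p ≡ −s·P_{p−1} (mod P_p)` (stated as divisibilities in `(ℤ/pℤ)[X]`). -/
theorem stmt12 (p : ℕ) (hp : p.Prime) (hodd : Odd p)
    (s : ℕ) (hs1 : 1 ≤ s) (hs2 : s ≤ p - 1) :
    (Odd s →
      (chebP p).map (Int.castRingHom (ZMod p)) ∣
        ((chebP s).map (Int.castRingHom (ZMod p))) ^ p - (s : Polynomial (ZMod p)))
    ∧ (Even s →
      (chebP p).map (Int.castRingHom (ZMod p)) ∣
        ((chebP s).map (Int.castRingHom (ZMod p))) ^ p +
          (s : Polynomial (ZMod p)) * (chebP (p - 1)).map (Int.castRingHom (ZMod p))) :=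
  stmt12_general p hp s
end

section
/- Let p be a prime and let k be a field of characteristic p. Let V and W be finite-dimensional vector spaces over k, let f, g : V → W be linear maps, and let u : W^{⊗p} → V^{⊗p} be a linear map satisfying u ∘ σ_W = σ_V ∘ u, where σ_V and σ_W are the cyclic permutation operators on the p-fold tensor powers. Then trace(((f+g)^{⊗p}) ∘ u) = trace((f^{⊗p}) ∘ u) + trace((g^{⊗p}) ∘ u), where each trace is the trace of an endomorphism of W^{⊗p}. (This is the key computation showing that the Frobenius functor Fr_0 is additive: the difference (f+g)^{⊗p} − f^{⊗p} − g^{⊗p} is a negligible morphism in the C_p-equivariantization.) -/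
/-- The cyclic permutation operator `σ_V` on the `p`-fold tensor power `V^{⊗p}`, sending
`v_1 ⊗ v_2 ⊗ ⋯ ⊗ v_p` to `v_2 ⊗ v_3 ⊗ ⋯ ⊗ v_p ⊗ v_1`. -/
noncomputable def cyc (k : Type) [Field k] (p : ℕ) (V : Type) [AddCommGroup V] [Module k V] :
    PiTensorProduct k (fun _ : Fin p => V) →ₗ[k] PiTensorProduct k (fun _ : Fin p => V) :=
  (PiTensorProduct.reindex k (fun _ : Fin p => V) (finRotate p).symm).toLinearMap

/-!
The map `(h₁, …, hₚ) ↦ tr((h₁ ⊗ ⋯ ⊗ hₚ) ∘ u)` is `p`-linear, and since `u` commutes with the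
cyclic permutations it is invariant under rotating its arguments. Expanding `(f + g)^{⊗p}` gives
a sum over the subsets `S ⊆ Fin p` of positions where `f` is chosen. Rotation permutes these
subsets with orbits of size `p`, except for the fixed points `∅` and `Fin p`, and in
characteristic `p` each orbit of size `p` contributes nothing.
-/

open MulAction PiTensorProduct LinearMap
open scoped Pointwise TensorProduct

theorem IsPGroup.sum_eq_zero_of_forall_mem_fixedPoints {p : ℕ} [Fact p.Prime]
    {G X M : Type*} [Group G] (hG : IsPGroup p G) [MulAction G X] [Fintype X]
    [AddCommMonoid M] (hM : ∀ m : M, p • m = 0) (v : X → M)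
    (hv : ∀ (g : G) x, v (g • x) = v x) (hfix : ∀ x ∈ fixedPoints G X, v x = 0) :
    ∑ x, v x = 0 := by
  classical
  rw [← Finset.sum_fiberwise Finset.univ (Quotient.mk (orbitRel G X)) v]
  refine Finset.sum_eq_zero fun ω _ => Quotient.inductionOn ω fun x => ?_
  have hfiber : ∑ y with Quotient.mk (orbitRel G X) y = ⟦x⟧, v y =
      ∑ y ∈ (orbit G x).toFinset, v x := by
    refine Finset.sum_congr (by ext; simp [Quotient.eq, orbitRel_apply]) ?_
    intro y hy
    obtain ⟨g, rfl⟩ := Set.mem_toFinset.mp hy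
    exact hv g x
  rw [hfiber, Finset.sum_const, Set.toFinset_card]
  by_cases hx : x ∈ fixedPoints G X
  · simp [hfix x hx]
  obtain ⟨n, hn⟩ := hG.card_orbit x
  obtain ⟨m, rfl⟩ : ∃ m, n = m + 1 := Nat.exists_eq_succ_of_ne_zero fun hn0 => hx <| by
    rw [mem_fixedPoints_iff_card_orbit_eq_one, ← Nat.card_eq_fintype_card, hn, hn0, pow_zero]
  rw [← Nat.card_eq_fintype_card, hn, pow_succ, mul_nsmul, hM]

theorem sum_eq_sum_filter_smul_eq_self_of_pow_eq_one {p : ℕ} [Fact p.Prime]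
    {G X M : Type*} [Group G] [MulAction G X] [Fintype X] [DecidableEq X]
    [AddCommMonoid M] (hM : ∀ m : M, p • m = 0) {g : G} (hg : g ^ p = 1) (v : X → M)
    (hv : ∀ x, v (g • x) = v x) :
    ∑ x, v x = ∑ x with g • x = x, v x := by
  have hfin : IsOfFinOrder g := isOfFinOrder_iff_pow_eq_one.mpr ⟨p, (Fact.out : p.Prime).pos, hg⟩
  have hpowers (h : Subgroup.zpowers g) : ∃ n : ℕ, (h : G) = g ^ n :=
    let ⟨n, hn⟩ := hfin.mem_powers_iff_mem_zpowers.mpr h.2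
    ⟨n, hn.symm⟩
  have hG : IsPGroup p (Subgroup.zpowers g) := fun h => by
    obtain ⟨n, hn⟩ := hpowers h
    refine ⟨1, Subtype.ext ?_⟩
    rw [pow_one, Subgroup.coe_pow, hn, pow_right_comm, hg, one_pow, Subgroup.coe_one]
  have hvpow (n : ℕ) (x : X) : v (g ^ n • x) = v x := by
    induction n with
    | zero => rw [pow_zero, one_smul]
    | succ n ih => rw [pow_succ', mul_smul, hv, ih]
  suffices ∑ x with ¬g • x = x, v x = 0 by
    rw [← Finset.sum_filter_add_sum_filter_not Finset.univ (fun x => g • x = x), this, add_zero]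
  rw [Finset.sum_filter]
  refine hG.sum_eq_zero_of_forall_mem_fixedPoints hM _ (fun h x => ?_) (fun x hx => ?_)
  · obtain ⟨n, hn⟩ := hpowers h
    have hcomm : g • g ^ n • x = g ^ n • g • x := by rw [smul_smul, ← pow_succ', pow_succ, mul_smul]
    simp only [Subgroup.smul_def, hn, hcomm, smul_left_cancel_iff, hvpow]
  · have hgx : g • x = x := hx ⟨g, Subgroup.mem_zpowers g⟩
    simp [hgx]

theorem finRotate_smul_finset_eq_self_iff {n : ℕ} (hn : 2 ≤ n) {S : Finset (Fin n)} :
    finRotate n • S = S ↔ S = ∅ ∨ S = Finset.univ := by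
  refine ⟨fun hS => or_iff_not_imp_left.mpr fun hne => ?_, ?_⟩
  · obtain ⟨i, hi⟩ := Finset.nonempty_iff_ne_empty.mpr hne
    have hmoved (j : Fin n) : finRotate n j ≠ j := by
      rw [← Equiv.Perm.mem_support, support_finRotate_of_le hn]
      exact Finset.mem_univ j
    refine Finset.eq_univ_iff_forall.mpr fun j => ?_
    obtain ⟨m, rfl⟩ := (isCycle_finRotate_of_le hn).exists_pow_eq (hmoved i) (hmoved j)
    have hSm : (finRotate n ^ m) • S = S := by
      induction m with
      | zero => rw [pow_zero, one_smul]
      | succ m ih => rw [pow_succ', mul_smul, ih, hS]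
    rw [← hSm]
    exact Finset.smul_mem_smul_finset hi
  · rintro (rfl | rfl)
    · exact Finset.smul_finset_empty _
    · exact Finset.smul_finset_univ

theorem orderOf_finRotate_of_le {n : ℕ} (hn : 2 ≤ n) : orderOf (finRotate n) = n := by
  rw [(isCycle_finRotate_of_le hn).orderOf, support_finRotate_of_le hn, Finset.card_univ,
    Fintype.card_fin]

theorem MultilinearMap.map_diag_add_of_finRotate_invariant {p : ℕ} [Fact p.Prime]
    {R E N : Type*} [CommSemiring R] [CharP R p] [AddCommMonoid E] [Module R E]
    [AddCommMonoid N] [Module R N] (M : MultilinearMap R (fun _ : Fin p => E) N)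
    (hrot : ∀ m, M (m ∘ finRotate p) = M m) (x y : E) :
    M (fun _ => x + y) = M (fun _ => x) + M (fun _ => y) := by
  classical
  have hp2 := (Fact.out : p.Prime).two_le
  have hc : finRotate p ^ p = 1 := by
    simpa [orderOf_finRotate_of_le hp2] using pow_orderOf_eq_one (finRotate p)
  set v : Finset (Fin p) → N := fun S => M (S.piecewise (fun _ => x) (fun _ => y))
  have hv (S : Finset (Fin p)) : v (finRotate p • S) = v S := by
    simp only [v]
    rw [← hrot]
    congr 1
    funext i
    simp only [Function.comp_apply, Finset.piecewise, ← Equiv.Perm.smul_def,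
      Finset.smul_mem_smul_finset_iff]
  have hpN (n : N) : p • n = 0 := by
    rw [← Nat.cast_smul_eq_nsmul R, CharP.cast_eq_zero, zero_smul]
  have hne : (∅ : Finset (Fin p)) ≠ Finset.univ :=
    (Finset.univ_nonempty_iff.mpr ⟨⟨0, by omega⟩⟩).ne_empty.symm
  have hfixed : Finset.univ.filter (fun S : Finset (Fin p) => finRotate p • S = S) =
      {∅, Finset.univ} := by
    ext S
    simp [finRotate_smul_finset_eq_self_iff hp2]
  calc M (fun _ => x + y) = ∑ S, v S := M.map_add_univ _ _
    _ = ∑ S with finRotate p • S = S, v S :=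
      sum_eq_sum_filter_smul_eq_self_of_pow_eq_one hpN hc v hv
    _ = M (fun _ => x) + M (fun _ => y) := by
      rw [hfixed, Finset.sum_pair hne, add_comm]
      simp [v]

section
variable {R ι V W : Type*} [CommRing R] [AddCommGroup V] [Module R V]
  [AddCommGroup W] [Module R W]

theorem PiTensorProduct.trace_map_comp_eq_of_comp_reindex (e : ι ≃ ι)
    (u : (⨂[R] _ : ι, W) →ₗ[R] ⨂[R] _ : ι, V)
    (hu : u ∘ₗ reindex R (fun _ => W) e = reindex R (fun _ => V) e ∘ₗ u)
    (h : ι → V →ₗ[R] W) :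
    trace R _ (map (fun i => h (e.symm i)) ∘ₗ u) = trace R _ (map h ∘ₗ u) := by
  set eW := reindex R (fun _ : ι => W) e
  have hconj : map (fun i => h (e.symm i)) ∘ₗ u = eW.conj (map h ∘ₗ u) := by
    calc map (fun i => h (e.symm i)) ∘ₗ u
        = map (fun i => h (e.symm i)) ∘ₗ (u ∘ₗ eW) ∘ₗ eW.symm.toLinearMap := by
          ext; simp
      _ = (map (fun i => h (e.symm i)) ∘ₗ reindex R (fun _ => V) e) ∘ₗ u ∘ₗ
          eW.symm.toLinearMap := by
          rw [hu]; rfl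
      _ = eW.conj (map h ∘ₗ u) := by
          rw [map_comp_reindex_eq, LinearEquiv.conj_apply]; rfl
  rw [hconj, trace_conj']

variable (R) in
noncomputable def traceMapComp (u : (⨂[R] _ : ι, W) →ₗ[R] ⨂[R] _ : ι, V) :
    MultilinearMap R (fun _ : ι => V →ₗ[R] W) R :=
  (trace R _ ∘ₗ lcomp R _ u).compMultilinearMap (mapMultilinear R _ _)

end

theorem stmt13_general (p : ℕ) (hp : p.Prime) (k : Type) [Field k] [CharP k p]
    (V W : Type) [AddCommGroup V] [Module k V]
    [AddCommGroup W] [Module k W]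
    (f g : V →ₗ[k] W)
    (u : PiTensorProduct k (fun _ : Fin p => W) →ₗ[k] PiTensorProduct k (fun _ : Fin p => V))
    (hu : u ∘ₗ cyc k p W = cyc k p V ∘ₗ u) :
    LinearMap.trace k (PiTensorProduct k (fun _ : Fin p => W))
        ((PiTensorProduct.map fun _ : Fin p => f + g) ∘ₗ u) =
      LinearMap.trace k (PiTensorProduct k (fun _ : Fin p => W))
          ((PiTensorProduct.map fun _ : Fin p => f) ∘ₗ u) +
        LinearMap.trace k (PiTensorProduct k (fun _ : Fin p => W))
          ((PiTensorProduct.map fun _ : Fin p => g) ∘ₗ u) := by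
  have := Fact.mk hp
  have hrot (h : Fin p → V →ₗ[k] W) : traceMapComp k u (h ∘ finRotate p) = traceMapComp k u h :=
    trace_map_comp_eq_of_comp_reindex (finRotate p).symm u hu h
  exact (traceMapComp k u).map_diag_add_of_finRotate_invariant hrot f g

/-- Let `k` be a field of characteristic `p` (`p` prime), `V`, `W`
finite-dimensional over `k`, `f, g : V → W` linear, and `u : W^{⊗p} → V^{⊗p}` linear with
`u ∘ σ_W = σ_V ∘ u`. Then
`tr((f+g)^{⊗p} ∘ u) = tr(f^{⊗p} ∘ u) + tr(g^{⊗p} ∘ u)`. -/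
theorem stmt13 (p : ℕ) (hp : p.Prime) (k : Type) [Field k] [CharP k p]
    (V W : Type) [AddCommGroup V] [Module k V] [FiniteDimensional k V]
    [AddCommGroup W] [Module k W] [FiniteDimensional k W]
    (f g : V →ₗ[k] W)
    (u : PiTensorProduct k (fun _ : Fin p => W) →ₗ[k] PiTensorProduct k (fun _ : Fin p => V))
    (hu : u ∘ₗ cyc k p W = cyc k p V ∘ₗ u) :
    LinearMap.trace k (PiTensorProduct k (fun _ : Fin p => W))
        ((PiTensorProduct.map fun _ : Fin p => f + g) ∘ₗ u) =
      LinearMap.trace k (PiTensorProduct k (fun _ : Fin p => W))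
          ((PiTensorProduct.map fun _ : Fin p => f) ∘ₗ u) +
        LinearMap.trace k (PiTensorProduct k (fun _ : Fin p => W))
          ((PiTensorProduct.map fun _ : Fin p => g) ∘ₗ u) :=
  stmt13_general p hp k V W f g u hu
end
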